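/- arXiv:1102.4634 — 5 statements merged into one kernel-verified Lean document; each statement's English description precedes it below -/
import Mathlib

section
/- If a graph G contains the complete bipartite graph K_{2,3} as a subgraph (not necessarily induced), then G is not a median graph. -/
def SimpleGraph.Between {V : Type} (G : SimpleGraph V) (a m b : V) : Prop :=
  G.dist a m + G.dist m b = G.dist a b

def SimpleGraph.IsMedianGraph {V : Type} (G : SimpleGraph V) : Prop :=
  G.Connected ∧ ∀ a b c : V, ∃! m : V,
    G.Between a m b ∧ G.Between a m c ∧ G.Between b m c

/-- `G` contains `K_{2,3}` as a (not necessarily induced) subgraph. -/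
def SimpleGraph.ContainsK23 {V : Type} (G : SimpleGraph V) : Prop :=
  ∃ f : Fin 2 ⊕ Fin 3 → V, Function.Injective f ∧
    ∀ (a : Fin 2) (b : Fin 3), G.Adj (f (Sum.inl a)) (f (Sum.inr b))

lemma triangle_not_median {V : Type} (G : SimpleGraph V) (hM : G.IsMedianGraph)
    {a b c : V} (hab : G.Adj a b) (hac : G.Adj a c) (hbc : G.Adj b c) : False := by
  obtain ⟨hconn, hmed⟩ := hM
  obtain ⟨m, ⟨h1, h2, h3⟩, -⟩ := hmed a b c
  have dab : G.dist a b = 1 := SimpleGraph.dist_eq_one_iff_adj.mpr hab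
  have dac : G.dist a c = 1 := SimpleGraph.dist_eq_one_iff_adj.mpr hac
  have dbc : G.dist b c = 1 := SimpleGraph.dist_eq_one_iff_adj.mpr hbc
  have dba : G.dist b a = 1 := SimpleGraph.dist_eq_one_iff_adj.mpr hab.symm
  unfold SimpleGraph.Between at h1 h2 h3
  rw [dab] at h1
  have : G.dist a m = 0 ∨ G.dist m b = 0 := by omega
  rcases this with h | h
  · have hma : m = a := (hconn.dist_eq_zero_iff.mp h).symm
    subst hma
    rw [dba, dac, dbc] at h3
    omega
  · have hmb : m = b := hconn.dist_eq_zero_iff.mp h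
    subst hmb
    rw [dab, dbc, dac] at h2
    omega

/-- If `G` contains `K_{2,3}` as a subgraph, then `G` is not a median graph. -/
theorem containsK23_not_median {V : Type} (G : SimpleGraph V)
    (h : G.ContainsK23) : ¬ G.IsMedianGraph := by
  obtain ⟨f, hinj, hadj⟩ := h
  intro hM
  obtain ⟨hconn, hmed⟩ := hM
  set u : Fin 2 → V := fun i => f (Sum.inl i) with hu
  set v : Fin 3 → V := fun j => f (Sum.inr j) with hv
  -- no two v's are adjacent, else triangle with u 0
  have hnadj : ∀ i j : Fin 3, ¬ G.Adj (v i) (v j) := by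
    intro i j hij
    exact triangle_not_median G ⟨hconn, hmed⟩ (hadj 0 i) (hadj 0 j) hij
  have hdist : ∀ i j : Fin 3, i ≠ j → G.dist (v i) (v j) = 2 := by
    intro i j hij
    have hne : v i ≠ v j := fun e => hij (Sum.inr.inj (hinj e))
    have h0 : G.dist (v i) (v j) ≠ 0 := fun e => hne (hconn.dist_eq_zero_iff.mp e)
    have h1 : G.dist (v i) (v j) ≠ 1 := fun e => hnadj i j (SimpleGraph.dist_eq_one_iff_adj.mp e)
    have h2 : G.dist (v i) (v j) ≤ 2 := by
      have hle := G.dist_le (((hadj 0 i).symm.toWalk.append (hadj 0 j).toWalk))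
      simpa [SimpleGraph.Walk.length_append] using hle
    omega
  have hmedu : ∀ k : Fin 2, G.Between (v 0) (u k) (v 1) ∧
      G.Between (v 0) (u k) (v 2) ∧ G.Between (v 1) (u k) (v 2) := by
    intro k
    have d0 : G.dist (v 0) (u k) = 1 := SimpleGraph.dist_eq_one_iff_adj.mpr (hadj k 0).symm
    have d1 : G.dist (u k) (v 1) = 1 := SimpleGraph.dist_eq_one_iff_adj.mpr (hadj k 1)
    have d2 : G.dist (u k) (v 2) = 1 := SimpleGraph.dist_eq_one_iff_adj.mpr (hadj k 2)
    have d1' : G.dist (v 1) (u k) = 1 := SimpleGraph.dist_eq_one_iff_adj.mpr (hadj k 1).symm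
    refine ⟨?_, ?_, ?_⟩ <;> unfold SimpleGraph.Between
    · rw [d0, d1, hdist 0 1 (by decide)]
    · rw [d0, d2, hdist 0 2 (by decide)]
    · rw [d1', d2, hdist 1 2 (by decide)]
  obtain ⟨m, -, huniq⟩ := hmed (v 0) (v 1) (v 2)
  have e0 := huniq (u 0) (hmedu 0)
  have e1 := huniq (u 1) (hmedu 1)
  have : u 0 = u 1 := e0.trans e1.symm
  have := hinj this
  simp at this
end

section
/- Let G be a connected graph containing the path P_3 (on three vertices) as a subgraph, and let H be a connected graph containing as a subgraph the graph H_2 consisting of two adjacent vertices x, y each carrying a loop. Then the direct product G × H contains K_{2,3} as a subgraph, and hence is not a median graph. -/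
/-- A graph allowing loops: a symmetric adjacency relation on `V`. -/
structure LoopGraph (V : Type) where
  Adj : V → V → Prop
  symm : ∀ {u v : V}, Adj u v → Adj v u

namespace LoopGraph

variable {V W : Type}

/-- `Walk G u v n` : there is a walk of length `n` from `u` to `v` in `G`. -/
inductive Walk (G : LoopGraph V) : V → V → ℕ → Prop
  | nil (u : V) : Walk G u u 0
  | cons {u w v : V} {n : ℕ} : G.Adj u w → Walk G w v n → Walk G u v (n + 1)

def Connected (G : LoopGraph V) : Prop := ∀ u v : V, ∃ n : ℕ, G.Walk u v n

/-- Distance: the length of a shortest walk. -/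
noncomputable def dist (G : LoopGraph V) (u v : V) : ℕ := sInf {n : ℕ | G.Walk u v n}

/-- `m` lies on a geodesic from `a` to `b`. -/
def Between (G : LoopGraph V) (a m b : V) : Prop :=
  G.dist a m + G.dist m b = G.dist a b

/-- `m` is a median of the triple `a, b, c`. -/
def MedianOf (G : LoopGraph V) (m a b c : V) : Prop :=
  G.Between a m b ∧ G.Between a m c ∧ G.Between b m c

/-- A median graph: connected, loopless, and every triple of vertices has a
unique median. -/
def IsMedian (G : LoopGraph V) : Prop :=
  (∀ v : V, ¬ G.Adj v v) ∧ G.Connected ∧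
    ∀ a b c : V, ∃! m : V, G.MedianOf m a b c

/-- The direct (tensor) product of two graphs with loops. -/
def tensor (G : LoopGraph V) (H : LoopGraph W) : LoopGraph (V × W) where
  Adj p q := G.Adj p.1 q.1 ∧ H.Adj p.2 q.2
  symm h := ⟨G.symm h.1, H.symm h.2⟩

def Bipartite (G : LoopGraph V) : Prop :=
  ∃ c : V → Bool, ∀ {u v : V}, G.Adj u v → c u ≠ c v

/-- `G` contains `K_{2,3}` as a (not necessarily induced) subgraph. -/
def ContainsK23 (G : LoopGraph V) : Prop :=
  ∃ f : Fin 2 ⊕ Fin 3 → V, Function.Injective f ∧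
    ∀ (a : Fin 2) (b : Fin 3), G.Adj (f (Sum.inl a)) (f (Sum.inr b))

end LoopGraph

/-- The path graph on `k` vertices, as a loop graph (no loops). -/
def pathLG (k : ℕ) : LoopGraph (Fin k) where
  Adj i j := i.val + 1 = j.val ∨ j.val + 1 = i.val
  symm h := h.symm

/-- `E_l`: the path on `l` vertices `x_1, …, x_l` with a loop at the end vertex `x_1`. -/
def ELoopPath (l : ℕ) : LoopGraph (Fin l) where
  Adj i j := i.val + 1 = j.val ∨ j.val + 1 = i.val ∨ (i.val = 0 ∧ j.val = 0)
  symm h := by tauto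

namespace LoopGraph

variable {V : Type} {G : LoopGraph V}

lemma eq_of_walk_zero {u v : V} (h : G.Walk u v 0) : u = v := by
  cases h; rfl

lemma adj_of_walk_one {u v : V} (h : G.Walk u v 1) : G.Adj u v := by
  cases h with
  | cons ha hw => cases hw; exact ha

lemma dist_eq_one {u v : V} (h : G.Adj u v) (hne : u ≠ v) : G.dist u v = 1 := by
  have h1 : (1 : ℕ) ∈ {n : ℕ | G.Walk u v n} := Walk.cons h (Walk.nil v)
  have hle : G.dist u v ≤ 1 := Nat.sInf_le h1
  have hmem : G.Walk u v (G.dist u v) := Nat.sInf_mem ⟨1, h1⟩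
  have h0 : G.dist u v ≠ 0 := fun h0 => hne (eq_of_walk_zero (h0 ▸ hmem))
  omega

lemma dist_eq_two {u v : V} (h2 : G.Walk u v 2) (hne : u ≠ v) (hna : ¬ G.Adj u v) :
    G.dist u v = 2 := by
  have h2' : (2 : ℕ) ∈ {n : ℕ | G.Walk u v n} := h2
  have hle : G.dist u v ≤ 2 := Nat.sInf_le h2'
  have hmem : G.Walk u v (G.dist u v) := Nat.sInf_mem ⟨2, h2'⟩
  have h0 : G.dist u v ≠ 0 := fun h0 => hne (eq_of_walk_zero (h0 ▸ hmem))
  have h1 : G.dist u v ≠ 1 := fun h1 => hna (adj_of_walk_one (h1 ▸ hmem))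
  omega

lemma eq_of_dist_zero (hc : G.Connected) {u v : V} (h : G.dist u v = 0) : u = v := by
  have hmem : G.Walk u v (G.dist u v) := Nat.sInf_mem (hc u v)
  rw [h] at hmem
  exact eq_of_walk_zero hmem

end LoopGraph

/-- If `G` is connected and contains `P₃` as a subgraph, and `H` is connected and
contains `H₂` (two adjacent vertices, each with a loop) as a subgraph, then
`G × H` contains `K_{2,3}` as a subgraph and hence is not a median graph. -/
theorem p3_times_H2_not_median {V W : Type} (G : LoopGraph V) (H : LoopGraph W)
    (hGc : G.Connected) (hHc : H.Connected)
    (hP3 : ∃ v₁ v₂ v₃ : V, v₁ ≠ v₂ ∧ v₂ ≠ v₃ ∧ v₁ ≠ v₃ ∧ G.Adj v₁ v₂ ∧ G.Adj v₂ v₃)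
    (hH2 : ∃ x y : W, x ≠ y ∧ H.Adj x x ∧ H.Adj x y ∧ H.Adj y y) :
    (G.tensor H).ContainsK23 ∧ ¬ (G.tensor H).IsMedian := by
  obtain ⟨v₁, v₂, v₃, h12, h23, h13, ha12, ha23⟩ := hP3
  obtain ⟨x, y, hxy, hxx, haxy, hyy⟩ := hH2
  constructor
  · refine ⟨fun s => Sum.elim (fun a => (v₂, if a = 0 then x else y))
      (fun b => if b = 0 then (v₁, x) else if b = 1 then (v₃, x) else (v₁, y)) s, ?_, ?_⟩
    · intro a b hab
      rcases a with a | a <;> rcases b with b | b <;>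
        fin_cases a <;> fin_cases b <;>
        simp_all [Prod.ext_iff] <;> tauto
    · intro a b
      fin_cases a <;> fin_cases b <;> simp only [Sum.elim_inl, Sum.elim_inr] <;>
        norm_num <;>
        first
          | exact ⟨G.symm ha12, hxx⟩
          | exact ⟨ha23, hxx⟩
          | exact ⟨G.symm ha12, haxy⟩
          | exact ⟨G.symm ha12, H.symm haxy⟩
          | exact ⟨ha23, H.symm haxy⟩
          | exact ⟨G.symm ha12, hyy⟩
  · rintro ⟨hloop, hconn, hmed⟩
    have hGl : ∀ v : V, ¬ G.Adj v v := fun v hv => hloop (v, x) ⟨hv, hxx⟩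
    by_cases hA13 : G.Adj v₁ v₃
    · -- triangle (v₁,x), (v₂,x), (v₃,x) : no median exists
      obtain ⟨m, ⟨hb1, hb2, hb3⟩, -⟩ := hmed (v₁, x) (v₂, x) (v₃, x)
      have dAB : (G.tensor H).dist (v₁, x) (v₂, x) = 1 :=
        LoopGraph.dist_eq_one ⟨ha12, hxx⟩ (fun h => h12 (congrArg Prod.fst h))
      have dAC : (G.tensor H).dist (v₁, x) (v₃, x) = 1 :=
        LoopGraph.dist_eq_one ⟨hA13, hxx⟩ (fun h => h13 (congrArg Prod.fst h))
      have dBC : (G.tensor H).dist (v₂, x) (v₃, x) = 1 :=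
        LoopGraph.dist_eq_one ⟨ha23, hxx⟩ (fun h => h23 (congrArg Prod.fst h))
      simp only [LoopGraph.Between, dAB, dAC, dBC] at hb1 hb2 hb3
      have e1 : (v₁, x) = m ∨ m = (v₂, x) := by
        rcases Nat.eq_zero_or_pos ((G.tensor H).dist (v₁, x) m) with h | h
        · exact Or.inl (LoopGraph.eq_of_dist_zero hconn h)
        · exact Or.inr (LoopGraph.eq_of_dist_zero hconn (by omega))
      have e2 : (v₁, x) = m ∨ m = (v₃, x) := by
        rcases Nat.eq_zero_or_pos ((G.tensor H).dist (v₁, x) m) with h | h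
        · exact Or.inl (LoopGraph.eq_of_dist_zero hconn h)
        · exact Or.inr (LoopGraph.eq_of_dist_zero hconn (by omega))
      have e3 : (v₂, x) = m ∨ m = (v₃, x) := by
        rcases Nat.eq_zero_or_pos ((G.tensor H).dist (v₂, x) m) with h | h
        · exact Or.inl (LoopGraph.eq_of_dist_zero hconn h)
        · exact Or.inr (LoopGraph.eq_of_dist_zero hconn (by omega))
      rcases e1 with rfl | rfl
      · rcases e3 with h | h
        · exact h12 (congrArg Prod.fst h.symm)
        · exact h13 (congrArg Prod.fst h)
      · rcases e2 with h | h
        · exact h12 (congrArg Prod.fst h)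
        · exact h23 (congrArg Prod.fst h)
    · -- two distinct medians (v₂,x), (v₂,y) for the triple (v₁,x), (v₃,x), (v₁,y)
      obtain ⟨m, -, huniq⟩ := hmed (v₁, x) (v₃, x) (v₁, y)
      -- adjacency facts in the tensor product
      have A1 : (G.tensor H).Adj (v₁, x) (v₂, x) := ⟨ha12, hxx⟩
      have A2 : (G.tensor H).Adj (v₂, x) (v₃, x) := ⟨ha23, hxx⟩
      have A3 : (G.tensor H).Adj (v₂, x) (v₁, y) := ⟨G.symm ha12, haxy⟩
      have A4 : (G.tensor H).Adj (v₃, x) (v₂, x) := ⟨G.symm ha23, hxx⟩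
      have A5 : (G.tensor H).Adj (v₁, x) (v₂, y) := ⟨ha12, haxy⟩
      have A6 : (G.tensor H).Adj (v₂, y) (v₃, x) := ⟨ha23, H.symm (u := x) (v := y) haxy⟩
      have A7 : (G.tensor H).Adj (v₂, y) (v₁, y) := ⟨G.symm ha12, hyy⟩
      have A8 : (G.tensor H).Adj (v₃, x) (v₂, y) := ⟨G.symm ha23, haxy⟩
      have d01 : (G.tensor H).dist (v₁, x) (v₃, x) = 2 := by
        have w2 : (G.tensor H).Walk (v₁, x) (v₃, x) 2 :=
          LoopGraph.Walk.cons A1 (LoopGraph.Walk.cons A2 (LoopGraph.Walk.nil _))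
        exact LoopGraph.dist_eq_two w2
          (fun h => h13 (congrArg Prod.fst h)) (fun h => hA13 h.1)
      have d02 : (G.tensor H).dist (v₁, x) (v₁, y) = 2 := by
        have w2 : (G.tensor H).Walk (v₁, x) (v₁, y) 2 :=
          LoopGraph.Walk.cons A1 (LoopGraph.Walk.cons A3 (LoopGraph.Walk.nil _))
        exact LoopGraph.dist_eq_two w2
          (fun h => hxy (congrArg Prod.snd h)) (fun h => hGl v₁ h.1)
      have d12 : (G.tensor H).dist (v₃, x) (v₁, y) = 2 := by
        have w2 : (G.tensor H).Walk (v₃, x) (v₁, y) 2 :=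
          LoopGraph.Walk.cons A4 (LoopGraph.Walk.cons A3 (LoopGraph.Walk.nil _))
        exact LoopGraph.dist_eq_two w2
          (fun h => h13 (congrArg Prod.fst h).symm) (fun h => hA13 (G.symm h.1))
      have n1 : ((v₁, x) : V × W) ≠ (v₂, x) := fun h => h12 (congrArg Prod.fst h)
      have n2 : ((v₂, x) : V × W) ≠ (v₃, x) := fun h => h23 (congrArg Prod.fst h)
      have n3 : ((v₂, x) : V × W) ≠ (v₁, y) := fun h => h12 (congrArg Prod.fst h).symm
      have n4 : ((v₃, x) : V × W) ≠ (v₂, x) := fun h => h23 (congrArg Prod.fst h).symm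
      have n5 : ((v₁, x) : V × W) ≠ (v₂, y) := fun h => h12 (congrArg Prod.fst h)
      have n6 : ((v₂, y) : V × W) ≠ (v₃, x) := fun h => h23 (congrArg Prod.fst h)
      have n7 : ((v₂, y) : V × W) ≠ (v₁, y) := fun h => h12 (congrArg Prod.fst h).symm
      have n8 : ((v₃, x) : V × W) ≠ (v₂, y) := fun h => h23 (congrArg Prod.fst h).symm
      have med0 : (G.tensor H).MedianOf (v₂, x) (v₁, x) (v₃, x) (v₁, y) := by
        refine ⟨?_, ?_, ?_⟩ <;> simp only [LoopGraph.Between, d01, d02, d12]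
        · rw [LoopGraph.dist_eq_one A1 n1, LoopGraph.dist_eq_one A2 n2]
        · rw [LoopGraph.dist_eq_one A1 n1, LoopGraph.dist_eq_one A3 n3]
        · rw [LoopGraph.dist_eq_one A4 n4, LoopGraph.dist_eq_one A3 n3]
      have med1 : (G.tensor H).MedianOf (v₂, y) (v₁, x) (v₃, x) (v₁, y) := by
        refine ⟨?_, ?_, ?_⟩ <;> simp only [LoopGraph.Between, d01, d02, d12]
        · rw [LoopGraph.dist_eq_one A5 n5, LoopGraph.dist_eq_one A6 n6]
        · rw [LoopGraph.dist_eq_one A5 n5, LoopGraph.dist_eq_one A7 n7]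
        · rw [LoopGraph.dist_eq_one A8 n8, LoopGraph.dist_eq_one A7 n7]
      have e0 := huniq (v₂, x) med0
      have e1 := huniq (v₂, y) med1
      exact hxy (congrArg Prod.snd (e0.trans e1.symm))
end

section
/- Let G be a connected graph containing P_3 (vertices v_1 ~ v_2 ~ v_3) as a subgraph, and let H be a connected graph containing as a subgraph the graph H_3 on vertices x, y, z with edges (x,x), (x,y), (y,z), (z,z). Then the direct product G × H is not a median graph. -/
namespace LoopGraph

variable {V : Type}

lemma walk_dist {G : LoopGraph V} (hc : G.Connected) (u v : V) :
    G.Walk u v (G.dist u v) := Nat.sInf_mem (hc u v)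

lemma dist_le {G : LoopGraph V} {u v : V} {n : ℕ} (h : G.Walk u v n) :
    G.dist u v ≤ n := Nat.sInf_le h

lemma walk_zero {G : LoopGraph V} {u v : V} (h : G.Walk u v 0) : u = v := by
  cases h; rfl

lemma walk_one {G : LoopGraph V} {u v : V} (h : G.Walk u v 1) : G.Adj u v := by
  cases h with
  | cons h1 h2 => cases h2; exact h1

lemma dist_eq_zero {G : LoopGraph V} (hc : G.Connected) {u v : V}
    (h : G.dist u v = 0) : u = v :=
  walk_zero (h ▸ walk_dist hc u v)

lemma adj_dist {G : LoopGraph V} (hl : ∀ v : V, ¬ G.Adj v v) (hc : G.Connected)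
    {u v : V} (h : G.Adj u v) : G.dist u v = 1 := by
  have hle : G.dist u v ≤ 1 := dist_le (Walk.cons h (Walk.nil v))
  have h0 : G.dist u v ≠ 0 := fun h0 => hl v (dist_eq_zero hc h0 ▸ h)
  omega

lemma walk_parity {G : LoopGraph V} {c : V → Bool}
    (hp : ∀ {u v : V}, G.Adj u v → c u ≠ c v)
    {u v : V} {n : ℕ} (h : G.Walk u v n) : (c u = c v) ↔ n % 2 = 0 := by
  induction h with
  | nil => simp
  | @cons u' w' v' n' hadj hw ih =>
    have h1 : c u' ≠ c w' := hp hadj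
    constructor
    · intro h2
      have h3 : c w' ≠ c v' := fun he => h1 (h2.trans he.symm)
      have h4 : ¬ (n' % 2 = 0) := fun hn => h3 (ih.mpr hn)
      omega
    · intro h2
      have hn : ¬ (n' % 2 = 0) := by omega
      have h3 : c w' ≠ c v' := fun he => hn (ih.mp he)
      revert h1 h3
      cases c u' <;> cases c w' <;> cases c v' <;> simp

lemma median_coloring {G : LoopGraph V} (hM : G.IsMedian) (base : V) :
    ∃ c : V → Bool, ∀ {u v : V}, G.Adj u v → c u ≠ c v := by
  obtain ⟨hl, hc, hm⟩ := hM
  refine ⟨fun v => decide (G.dist v base % 2 = 1), ?_⟩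
  intro u v hadj
  obtain ⟨m, ⟨h1, h2, h3⟩, -⟩ := hm u v base
  have huv : G.dist u v = 1 := adj_dist hl hc hadj
  unfold Between at h1 h2 h3
  rw [huv] at h1
  have hcase : (G.dist u m = 0 ∧ G.dist m v = 1) ∨ (G.dist u m = 1 ∧ G.dist m v = 0) := by
    omega
  rcases hcase with ⟨e0, e1⟩ | ⟨e1, e0⟩
  · have hmu : u = m := dist_eq_zero hc e0
    subst hmu
    have hvu : G.dist v u = 1 := adj_dist hl hc (G.symm hadj)
    rw [hvu] at h3
    simp only [Ne, decide_eq_decide]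
    omega
  · have hmv : m = v := dist_eq_zero hc e0
    subst hmv
    rw [e1] at h2
    simp only [Ne, decide_eq_decide]
    omega

lemma dist_two {G : LoopGraph V} (hc : G.Connected) {c : V → Bool}
    (hp : ∀ {u v : V}, G.Adj u v → c u ≠ c v) {u w v : V}
    (hne : u ≠ v) (h1 : G.Adj u w) (h2 : G.Adj w v) : G.dist u v = 2 := by
  have hw : G.Walk u v 2 := .cons h1 (.cons h2 (.nil v))
  have hle : G.dist u v ≤ 2 := dist_le hw
  have heq : c u = c v := (walk_parity hp hw).mpr (by norm_num)
  have hpar : G.dist u v % 2 = 0 := (walk_parity hp (walk_dist hc u v)).mp heq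
  have h0 : G.dist u v ≠ 0 := fun h => hne (dist_eq_zero hc h)
  omega

lemma dist_three {G : LoopGraph V} (hc : G.Connected) {c : V → Bool}
    (hp : ∀ {u v : V}, G.Adj u v → c u ≠ c v) {u w1 w2 v : V}
    (hna : ¬ G.Adj u v) (h1 : G.Adj u w1) (h2 : G.Adj w1 w2) (h3 : G.Adj w2 v) :
    G.dist u v = 3 := by
  have hw : G.Walk u v 3 := .cons h1 (.cons h2 (.cons h3 (.nil v)))
  have hle : G.dist u v ≤ 3 := dist_le hw
  have hne : c u ≠ c v := fun he => by
    have := (walk_parity hp hw).mp he; omega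
  have hpar : G.dist u v % 2 = 1 := by
    by_contra h
    exact hne ((walk_parity hp (walk_dist hc u v)).mpr (by omega))
  have hd1 : G.dist u v ≠ 1 := fun he => hna (walk_one (he ▸ walk_dist hc u v))
  omega

end LoopGraph

/-- If `G` is connected and contains `P₃` as a subgraph, and `H` is connected and
contains `H₃` (a path `x–y–z` with loops at both ends `x` and `z`) as a
subgraph, then `G × H` is not a median graph. -/
theorem p3_times_H3_not_median {V W : Type} (G : LoopGraph V) (H : LoopGraph W)
    (hGc : G.Connected) (hHc : H.Connected)
    (hP3 : ∃ v₁ v₂ v₃ : V, v₁ ≠ v₂ ∧ v₂ ≠ v₃ ∧ v₁ ≠ v₃ ∧ G.Adj v₁ v₂ ∧ G.Adj v₂ v₃)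
    (hH3 : ∃ x y z : W, x ≠ y ∧ y ≠ z ∧ x ≠ z ∧
      H.Adj x x ∧ H.Adj x y ∧ H.Adj y z ∧ H.Adj z z) :
    ¬ (G.tensor H).IsMedian := by
  obtain ⟨v₁, v₂, v₃, hv12, hv23, hv13, h12, h23⟩ := hP3
  obtain ⟨x, y, z, hxy, hyz, hxz', hxx, hxy', hyz', hzz⟩ := hH3
  intro hM
  have hl : ∀ p : V × W, ¬ (G.tensor H).Adj p p := hM.1
  have hc : (G.tensor H).Connected := hM.2.1
  have hm := hM.2.2
  obtain ⟨c, hp⟩ := LoopGraph.median_coloring hM (v₁, x)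
  -- Basic tensor adjacency facts
  by_cases hHxz : H.Adj x z
  · -- Case `x ~ z` in `H`: use a = (v₁,x), b = (v₃,x), c = (v₁,z),
    -- medians m₁ = (v₂,x) and m₂ = (v₂,z).
    set a : V × W := (v₁, x) with ha
    set b : V × W := (v₃, x) with hb
    set cc : V × W := (v₁, z) with hcc
    set m₁ : V × W := (v₂, x) with hm₁
    set m₂ : V × W := (v₂, z) with hm₂
    have e_am1 : (G.tensor H).Adj a m₁ := ⟨h12, hxx⟩
    have e_m1b : (G.tensor H).Adj m₁ b := ⟨h23, hxx⟩
    have e_am2 : (G.tensor H).Adj a m₂ := ⟨h12, hHxz⟩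
    have e_m2b : (G.tensor H).Adj m₂ b := ⟨h23, H.symm hHxz⟩
    have e_m1c : (G.tensor H).Adj m₁ cc := ⟨G.symm h12, hHxz⟩
    have e_m2c : (G.tensor H).Adj m₂ cc := ⟨G.symm h12, hzz⟩
    have d_am1 : (G.tensor H).dist a m₁ = 1 := LoopGraph.adj_dist hl hc e_am1
    have d_m1b : (G.tensor H).dist m₁ b = 1 := LoopGraph.adj_dist hl hc e_m1b
    have d_am2 : (G.tensor H).dist a m₂ = 1 := LoopGraph.adj_dist hl hc e_am2
    have d_m2b : (G.tensor H).dist m₂ b = 1 := LoopGraph.adj_dist hl hc e_m2b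
    have d_m1c : (G.tensor H).dist m₁ cc = 1 := LoopGraph.adj_dist hl hc e_m1c
    have d_m2c : (G.tensor H).dist m₂ cc = 1 := LoopGraph.adj_dist hl hc e_m2c
    have d_bm1 : (G.tensor H).dist b m₁ = 1 :=
      LoopGraph.adj_dist hl hc ((G.tensor H).symm e_m1b)
    have d_bm2 : (G.tensor H).dist b m₂ = 1 :=
      LoopGraph.adj_dist hl hc ((G.tensor H).symm e_m2b)
    have d_ab : (G.tensor H).dist a b = 2 :=
      LoopGraph.dist_two hc hp (fun h => hv13 (congrArg Prod.fst h)) e_am1 e_m1b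
    have d_ac : (G.tensor H).dist a cc = 2 :=
      LoopGraph.dist_two hc hp (fun h => hxz' (congrArg Prod.snd h)) e_am1 e_m1c
    have d_bc : (G.tensor H).dist b cc = 2 :=
      LoopGraph.dist_two hc hp (fun h => hv13 (congrArg Prod.fst h).symm)
        ((G.tensor H).symm e_m1b) e_m1c
    have hmed1 : (G.tensor H).MedianOf m₁ a b cc := by
      refine ⟨?_, ?_, ?_⟩ <;> unfold LoopGraph.Between <;> omega
    have hmed2 : (G.tensor H).MedianOf m₂ a b cc := by
      refine ⟨?_, ?_, ?_⟩ <;> unfold LoopGraph.Between <;> omega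
    obtain ⟨m, -, huniq⟩ := hm a b cc
    have h1 := huniq m₁ hmed1
    have h2 := huniq m₂ hmed2
    exact hxz' (congrArg Prod.snd (h1.trans h2.symm))
  · -- Case `¬ x ~ z` in `H`: use a = (v₁,x), b = (v₃,x), c = (v₂,z),
    -- medians m₁ = (v₂,x) and m₂ = (v₂,y).
    set a : V × W := (v₁, x) with ha
    set b : V × W := (v₃, x) with hb
    set cc : V × W := (v₂, z) with hcc
    set m₁ : V × W := (v₂, x) with hm₁
    set m₂ : V × W := (v₂, y) with hm₂
    have e_am1 : (G.tensor H).Adj a m₁ := ⟨h12, hxx⟩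
    have e_m1b : (G.tensor H).Adj m₁ b := ⟨h23, hxx⟩
    have e_am2 : (G.tensor H).Adj a m₂ := ⟨h12, hxy'⟩
    have e_m2b : (G.tensor H).Adj m₂ b := ⟨h23, H.symm hxy'⟩
    -- intermediate vertices
    have e_m1_1y : (G.tensor H).Adj m₁ (v₁, y) := ⟨G.symm h12, hxy'⟩
    have e_1y_c : (G.tensor H).Adj (v₁, y) cc := ⟨h12, hyz'⟩
    have e_m2_1z : (G.tensor H).Adj m₂ (v₁, z) := ⟨G.symm h12, hyz'⟩
    have e_1z_c : (G.tensor H).Adj (v₁, z) cc := ⟨h12, hzz⟩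
    have d_am1 : (G.tensor H).dist a m₁ = 1 := LoopGraph.adj_dist hl hc e_am1
    have d_m1b : (G.tensor H).dist m₁ b = 1 := LoopGraph.adj_dist hl hc e_m1b
    have d_am2 : (G.tensor H).dist a m₂ = 1 := LoopGraph.adj_dist hl hc e_am2
    have d_m2b : (G.tensor H).dist m₂ b = 1 := LoopGraph.adj_dist hl hc e_m2b
    have d_bm1 : (G.tensor H).dist b m₁ = 1 :=
      LoopGraph.adj_dist hl hc ((G.tensor H).symm e_m1b)
    have d_bm2 : (G.tensor H).dist b m₂ = 1 :=
      LoopGraph.adj_dist hl hc ((G.tensor H).symm e_m2b)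
    have d_ab : (G.tensor H).dist a b = 2 :=
      LoopGraph.dist_two hc hp (fun h => hv13 (congrArg Prod.fst h)) e_am1 e_m1b
    have d_m1c : (G.tensor H).dist m₁ cc = 2 :=
      LoopGraph.dist_two hc hp (fun h => hxz' (congrArg Prod.snd h)) e_m1_1y e_1y_c
    have d_m2c : (G.tensor H).dist m₂ cc = 2 :=
      LoopGraph.dist_two hc hp (fun h => hyz (congrArg Prod.snd h)) e_m2_1z e_1z_c
    have d_ac : (G.tensor H).dist a cc = 3 :=
      LoopGraph.dist_three hc hp (fun h => hHxz h.2) e_am1 e_m1_1y e_1y_c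
    have d_bc : (G.tensor H).dist b cc = 3 :=
      LoopGraph.dist_three hc hp (fun h => hHxz h.2)
        ((G.tensor H).symm e_m1b) e_m1_1y e_1y_c
    have hmed1 : (G.tensor H).MedianOf m₁ a b cc := by
      refine ⟨?_, ?_, ?_⟩ <;> unfold LoopGraph.Between <;> omega
    have hmed2 : (G.tensor H).MedianOf m₂ a b cc := by
      refine ⟨?_, ?_, ?_⟩ <;> unfold LoopGraph.Between <;> omega
    obtain ⟨m, -, huniq⟩ := hm a b cc
    have h1 := huniq m₁ hmed1
    have h2 := huniq m₂ hmed2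
    exact hxy (congrArg Prod.snd (h1.trans h2.symm))
end

section
/- Let G be a connected graph with at least three vertices and H a connected graph with at least two vertices that contains at least two loops. Then the direct product G × H is not a median graph. -/
namespace LoopGraph

variable {V W : Type} {G : LoopGraph V} {H : LoopGraph W}

lemma Walk.append {u v w : V} {n : ℕ} (hw : G.Walk u v n) (e : G.Adj v w) :
    G.Walk u w (n + 1) := by
  induction hw with
  | nil u => exact Walk.cons e (Walk.nil _)
  | cons e' _ ih => exact Walk.cons e' (ih e)

lemma Walk.reverse {u v : V} {n : ℕ} (hw : G.Walk u v n) : G.Walk v u n := by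
  induction hw with
  | nil u => exact Walk.nil u
  | cons e _ ih => exact ih.append (G.symm e)

lemma Walk.trans {u v w : V} {m n : ℕ} (h1 : G.Walk u v m) (h2 : G.Walk v w n) :
    G.Walk u w (n + m) := by
  induction h1 with
  | nil => exact h2
  | cons e _ ih => exact Walk.cons e (ih h2)

lemma loop_walk {w : V} (h : G.Adj w w) : ∀ n, G.Walk w w n
  | 0 => Walk.nil w
  | n + 1 => Walk.cons h (loop_walk h n)

lemma walk_even {g g' : V} (h : G.Adj g g') : ∀ j, G.Walk g g (2 * j)
  | 0 => Walk.nil g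
  | j + 1 => by
      have h2 : G.Walk g g 2 := Walk.cons h (Walk.cons (G.symm h) (Walk.nil _))
      have := (walk_even h j).trans h2
      have e : 2 * (j + 1) = 2 + 2 * j := by omega
      rw [e]; exact this

lemma walk_odd {g g' : V} (h : G.Adj g g') (j : ℕ) : G.Walk g g' (2 * j + 1) :=
  Walk.cons h (walk_even (G.symm h) j)

lemma walk_pair : ∀ {n : ℕ} {g g' : V} {h h' : W}, G.Walk g g' n → H.Walk h h' n →
    (G.tensor H).Walk (g, h) (g', h') n := by
  intro n
  induction n with
  | zero => intro g g' h h' hG hH; cases hG; cases hH; exact Walk.nil _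
  | succ n ih =>
      intro g g' h h' hG hH
      cases hG with
      | cons e1 w1 =>
        cases hH with
        | cons e2 w2 => exact Walk.cons ⟨e1, e2⟩ (ih w1 w2)

lemma walk_proj₂ {P Q : V × W} {n : ℕ} (hw : (G.tensor H).Walk P Q n) :
    H.Walk P.2 Q.2 n := by
  induction hw with
  | nil => exact Walk.nil _
  | cons e _ ih => exact Walk.cons e.2 ih

end LoopGraph

/-- If `G` is connected with at least three vertices and `H` is connected with at
least two vertices and contains at least two loops, then `G × H` is not a
median graph. -/
theorem two_loops_not_median {V W : Type} (G : LoopGraph V) (H : LoopGraph W)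
    (hGc : G.Connected) (hHc : H.Connected)
    (hV : ∃ a b c : V, a ≠ b ∧ b ≠ c ∧ a ≠ c) (hW : ∃ a b : W, a ≠ b)
    (hloops : ∃ x y : W, x ≠ y ∧ H.Adj x x ∧ H.Adj y y) :
    ¬ (G.tensor H).IsMedian := by
  intro hM
  obtain ⟨hl, hc, hmed⟩ := hM
  obtain ⟨x, y, hxy, hxx, hyy⟩ := hloops
  set T := G.tensor H with hT
  -- G is loopless
  have hGl : ∀ g : V, ¬ G.Adj g g := fun g hg => hl (g, x) ⟨hg, hxx⟩
  -- a vertex with two distinct neighbours in G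
  have hupq : ∃ u p q : V, G.Adj u p ∧ G.Adj u q ∧ p ≠ q := by
    by_contra hcon
    push_neg at hcon
    obtain ⟨a, b, c, hab, hbc, hac⟩ := hV
    obtain ⟨n, hw⟩ := hGc a b
    cases hw with
    | nil => exact hab rfl
    | cons e hw' =>
      rename_i w1 n'
      have key : ∀ {m : ℕ} {s t : V}, G.Walk s t m → (s = a ∨ s = w1) →
          (t = a ∨ t = w1) := by
        intro m s t hwk
        induction hwk with
        | nil => exact id
        | cons e' _ ih =>
          intro hs
          apply ih
          rcases hs with rfl | rfl
          · exact Or.inr (hcon _ _ _ e' e)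
          · exact Or.inl (hcon _ _ _ e' (G.symm e))
      have hb : b = w1 := (key hw' (Or.inr rfl)).resolve_left (Ne.symm hab)
      obtain ⟨m2, hw2⟩ := hGc a c
      have hcw : c = w1 := (key hw2 (Or.inl rfl)).resolve_left (Ne.symm hac)
      exact hbc (hb.trans hcw.symm)
  obtain ⟨u, p, q, hup, huq, hpq⟩ := hupq
  -- the shortest-walk data in H between the two loops
  have hSne : Set.Nonempty {n | H.Walk x y n} := hHc x y
  have hk_mem : H.Walk x y (H.dist x y) := Nat.sInf_mem hSne
  set k := H.dist x y with hkdef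
  have wxy : H.Walk x y k := hk_mem
  have hk1 : 1 ≤ k := by
    rcases Nat.eq_zero_or_pos k with h0 | h; swap; · exact h
    rw [h0] at hk_mem; cases hk_mem; exact absurd rfl hxy
  obtain ⟨k', hk'⟩ : ∃ k', k = k' + 1 := ⟨k - 1, by omega⟩
  rw [hk'] at hk_mem
  obtain ⟨z, hxz, wzy⟩ : ∃ z, H.Adj x z ∧ H.Walk z y k' := by
    cases hk_mem with
    | cons e w => exact ⟨_, e, w⟩
  have hzx : z ≠ x := by
    rintro rfl
    have : k ≤ k' := Nat.sInf_le wzy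
    omega
  have wzyk : H.Walk z y k := by rw [hk']; exact wzy.append hyy
  -- basic distance facts in T
  have hTd1 : ∀ {A B : V × W}, T.Adj A B → T.dist A B = 1 := by
    intro A B e
    refine le_antisymm (Nat.sInf_le (LoopGraph.Walk.cons e (LoopGraph.Walk.nil _))) ?_
    refine le_csInf ⟨1, LoopGraph.Walk.cons e (LoopGraph.Walk.nil _)⟩ ?_
    intro m hm
    match m, hm with
    | 0, hm => cases hm; exact absurd e (hl _)
    | m + 1, _ => omega
  have hTd0 : ∀ {A B : V × W}, T.dist A B = 0 → A = B := by
    intro A B h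
    have hmem : T.Walk A B (T.dist A B) := Nat.sInf_mem (hc A B)
    rw [h] at hmem
    cases hmem; rfl
  -- parity: T is bipartite because medians exist
  set o : V × W := (u, x) with ho
  have hedge : ∀ {A B : V × W}, T.Adj A B → (T.dist A o + 1) % 2 = T.dist B o % 2 := by
    intro A B e
    obtain ⟨m, hm, -⟩ := hmed A B o
    obtain ⟨h1, h2, h3⟩ := hm
    have h1' : T.dist A m + T.dist m B = T.dist A B := h1
    have h2' : T.dist A m + T.dist m o = T.dist A o := h2
    have h3' : T.dist B m + T.dist m o = T.dist B o := h3
    rw [hTd1 e] at h1'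
    have : T.dist A m = 0 ∨ T.dist m B = 0 := by omega
    rcases this with h | h
    · have hAm := hTd0 h
      subst hAm
      have hBA : T.dist B A = 1 := hTd1 (T.symm e)
      omega
    · have hmB := hTd0 h
      subst hmB
      have hAB : T.dist A m = 1 := hTd1 e
      omega
  have hwp : ∀ {n : ℕ} {A B : V × W}, T.Walk A B n →
      (T.dist A o + n) % 2 = T.dist B o % 2 := by
    intro n A B hw
    induction hw with
    | nil => omega
    | cons e _ ih => have := hedge e; omega
  have hpar : ∀ {A B : V × W} {m n : ℕ}, T.Walk A B m → T.Walk A B n →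
      m % 2 = n % 2 := by
    intro A B m n h1 h2
    have := hwp h1; have := hwp h2; omega
  -- exact distance tool
  have DE : ∀ {A B : V × W} {n : ℕ}, T.Walk A B n →
      (∀ m, T.Walk A B m → n ≤ m + 1) → T.dist A B = n := by
    intro A B n hw hlb
    refine le_antisymm (Nat.sInf_le hw) (le_csInf ⟨n, hw⟩ ?_)
    intro m hm
    have := hpar hm hw; have := hlb m hm; omega
  -- single-edge steps
  have step : ∀ {g g' : V} {h h' : W}, G.Adj g g' → H.Adj h h' →
      T.Walk (g, h) (g', h') 1 :=
    fun e1 e2 => LoopGraph.Walk.cons ⟨e1, e2⟩ (LoopGraph.Walk.nil _)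
  have LB1 : ∀ {A B : V × W}, ∀ m : ℕ, T.Walk A B m → 1 ≤ m + 1 := fun _ _ => by omega
  have hpu : p ≠ u := fun h => hGl u (h ▸ hup)
  have hqu : q ≠ u := fun h => hGl u (h ▸ huq)
  -- lower bounds through the H-projection
  have LBxy : ∀ {m : ℕ}, H.Walk x y m → k ≤ m := fun hm => Nat.sInf_le hm
  have LByx : ∀ {m : ℕ}, H.Walk y x m → k ≤ m := fun hm => LBxy hm.reverse
  have LBzy : ∀ {m : ℕ}, H.Walk z y m → k ≤ m + 1 :=
    fun hm => LBxy (LoopGraph.Walk.cons hxz hm)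
  have LByz : ∀ {m : ℕ}, H.Walk y z m → k ≤ m + 1 :=
    fun hm => LBzy hm.reverse
  -- common distances
  have dpq2 : T.dist (p, x) (q, x) = 2 := by
    refine DE (LoopGraph.walk_pair
      (LoopGraph.Walk.cons (G.symm hup) (LoopGraph.Walk.cons huq (LoopGraph.Walk.nil _)))
      (LoopGraph.loop_walk hxx 2)) ?_
    intro m hm
    match m, hm with
    | 0, hm => cases hm; exact absurd rfl hpq
    | m + 1, _ => omega
  rcases Nat.even_or_odd k with hkev | hkod
  · -- k even : triple (u,y), (p,x), (q,x), medians (u,x), (u,z)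
    obtain ⟨j, hj⟩ := hkev
    have hGuu : G.Walk u u k := by
      have := LoopGraph.walk_even hup j
      have e : 2 * j = k := by omega
      rwa [e] at this
    have hGup : G.Walk u p (k + 1) := by
      have := LoopGraph.walk_odd hup j
      have e : 2 * j + 1 = k + 1 := by omega
      rwa [e] at this
    have hGuq : G.Walk u q (k + 1) := by
      have := LoopGraph.walk_odd huq j
      have e : 2 * j + 1 = k + 1 := by omega
      rwa [e] at this
    have wyx : H.Walk y x k := wxy.reverse
    have wyx1 : H.Walk y x (k + 1) := (LoopGraph.Walk.cons hxx wxy).reverse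
    have dam1 : T.dist (u, y) (u, x) = k :=
      DE (LoopGraph.walk_pair hGuu wyx)
        (fun m hm => by have := LByx (LoopGraph.walk_proj₂ hm); omega)
    have dm1b : T.dist (u, x) (p, x) = 1 := DE (step hup hxx) LB1
    have dm1c : T.dist (u, x) (q, x) = 1 := DE (step huq hxx) LB1
    have dab : T.dist (u, y) (p, x) = k + 1 :=
      DE (LoopGraph.walk_pair hGup wyx1)
        (fun m hm => by have := LByx (LoopGraph.walk_proj₂ hm); omega)
    have dac : T.dist (u, y) (q, x) = k + 1 :=
      DE (LoopGraph.walk_pair hGuq wyx1)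
        (fun m hm => by have := LByx (LoopGraph.walk_proj₂ hm); omega)
    have dam2 : T.dist (u, y) (u, z) = k :=
      DE (LoopGraph.walk_pair hGuu wzyk.reverse)
        (fun m hm => by have := LByz (LoopGraph.walk_proj₂ hm); omega)
    have dm2b : T.dist (u, z) (p, x) = 1 := DE (step hup (H.symm hxz)) LB1
    have dm2c : T.dist (u, z) (q, x) = 1 := DE (step huq (H.symm hxz)) LB1
    have dbm1 : T.dist (p, x) (u, x) = 1 := DE (step (G.symm hup) hxx) LB1
    have dbm2 : T.dist (p, x) (u, z) = 1 := DE (step (G.symm hup) hxz) LB1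
    have M1 : T.MedianOf (u, x) (u, y) (p, x) (q, x) := by
      refine ⟨?_, ?_, ?_⟩ <;> show T.dist _ _ + T.dist _ _ = T.dist _ _
      · rw [dam1, dm1b, dab]; try omega
      · rw [dam1, dm1c, dac]; try omega
      · rw [dbm1, dm1c, dpq2]; try omega
    have M2 : T.MedianOf (u, z) (u, y) (p, x) (q, x) := by
      refine ⟨?_, ?_, ?_⟩ <;> show T.dist _ _ + T.dist _ _ = T.dist _ _
      · rw [dam2, dm2b, dab]; try omega
      · rw [dam2, dm2c, dac]; try omega
      · rw [dbm2, dm2c, dpq2]; try omega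
    obtain ⟨m, -, huniq⟩ := hmed (u, y) (p, x) (q, x)
    have : ((u, x) : V × W) = (u, z) := (huniq _ M1).trans (huniq _ M2).symm
    exact hzx (congrArg Prod.snd this).symm
  · -- k odd : triple (p,x), (p,y), (q,x), medians (u,x), (u,z)
    obtain ⟨j, hj⟩ := hkod
    have hGupk : G.Walk u p k := by
      have := LoopGraph.walk_odd hup j
      have e : 2 * j + 1 = k := by omega
      rwa [e] at this
    have hGpuk : G.Walk p u k := by
      have := LoopGraph.walk_odd (G.symm hup) j
      have e : 2 * j + 1 = k := by omega
      rwa [e] at this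
    have hGpp : G.Walk p p (k + 1) := by
      have := LoopGraph.walk_even (G.symm hup) (j + 1)
      have e : 2 * (j + 1) = k + 1 := by omega
      rwa [e] at this
    have hGpq : G.Walk p q (k + 1) := by
      have w2 : G.Walk p q 2 :=
        LoopGraph.Walk.cons (G.symm hup) (LoopGraph.Walk.cons huq (LoopGraph.Walk.nil _))
      have := (LoopGraph.walk_even (G.symm hup) j).trans w2
      have e : 2 + 2 * j = k + 1 := by omega
      rwa [e] at this
    have wyx1 : H.Walk y x (k + 1) := (LoopGraph.Walk.cons hxx wxy).reverse
    have dam1 : T.dist (p, x) (u, x) = 1 := DE (step (G.symm hup) hxx) LB1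
    have dm1b : T.dist (u, x) (p, y) = k :=
      DE (LoopGraph.walk_pair hGupk wxy)
        (fun m hm => by have := LBxy (LoopGraph.walk_proj₂ hm); omega)
    have dm1c : T.dist (u, x) (q, x) = 1 := DE (step huq hxx) LB1
    have dab : T.dist (p, x) (p, y) = k + 1 :=
      DE (LoopGraph.walk_pair hGpp (LoopGraph.Walk.cons hxx wxy))
        (fun m hm => by have := LBxy (LoopGraph.walk_proj₂ hm); omega)
    have dbm1 : T.dist (p, y) (u, x) = k :=
      DE (LoopGraph.walk_pair hGpuk wxy.reverse)
        (fun m hm => by have := LByx (LoopGraph.walk_proj₂ hm); omega)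
    have dbc : T.dist (p, y) (q, x) = k + 1 :=
      DE (LoopGraph.walk_pair hGpq wyx1)
        (fun m hm => by have := LByx (LoopGraph.walk_proj₂ hm); omega)
    have dam2 : T.dist (p, x) (u, z) = 1 := DE (step (G.symm hup) hxz) LB1
    have dm2b : T.dist (u, z) (p, y) = k :=
      DE (LoopGraph.walk_pair hGupk wzyk)
        (fun m hm => by have := LBzy (LoopGraph.walk_proj₂ hm); omega)
    have dm2c : T.dist (u, z) (q, x) = 1 := DE (step huq (H.symm hxz)) LB1
    have dbm2 : T.dist (p, y) (u, z) = k :=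
      DE (LoopGraph.walk_pair hGpuk wzyk.reverse)
        (fun m hm => by have := LByz (LoopGraph.walk_proj₂ hm); omega)
    have M1 : T.MedianOf (u, x) (p, x) (p, y) (q, x) := by
      refine ⟨?_, ?_, ?_⟩ <;> show T.dist _ _ + T.dist _ _ = T.dist _ _
      · rw [dam1, dm1b, dab]; try omega
      · rw [dam1, dm1c, dpq2]; try omega
      · rw [dbm1, dm1c, dbc]; try omega
    have M2 : T.MedianOf (u, z) (p, x) (p, y) (q, x) := by
      refine ⟨?_, ?_, ?_⟩ <;> show T.dist _ _ + T.dist _ _ = T.dist _ _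
      · rw [dam2, dm2b, dab]; try omega
      · rw [dam2, dm2c, dpq2]; try omega
      · rw [dbm2, dm2c, dbc]; try omega
    obtain ⟨m, -, huniq⟩ := hmed (p, x) (p, y) (q, x)
    have : ((u, x) : V × W) = (u, z) := (huniq _ M1).trans (huniq _ M2).symm
    exact hzx (congrArg Prod.snd this).symm
end

section
/- The direct product P_k × E_l (k ≥ 3, l ≥ 2) has exactly (2l − 1)(k − 1) edges and contains exactly (k − 2)(l − 1) four-cycles (squares), so the number of squares equals m − n + 1 where m is the number of edges and n = kl is the number of vertices. -/
section CountAux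

private def xc (l j : ℕ) : ℕ :=
  if j < l - 1 then j else if j = 2 * l - 2 then 0 else j - (l - 1) + 1

private def yc (l j : ℕ) : ℕ :=
  if j < l - 1 then j + 1 else if j = 2 * l - 2 then 0 else j - (l - 1)

private def edgeFun (k l : ℕ) (hk : 3 ≤ k) (hl : 2 ≤ l)
    (p : Fin (k - 1) × Fin (2 * l - 1)) : Sym2 (Fin k × Fin l) :=
  s(((⟨p.1.1, by have := p.1.2; omega⟩ : Fin k),
     (⟨xc l p.2.1, by have := p.2.2; unfold xc; split_ifs <;> omega⟩ : Fin l)),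
    ((⟨p.1.1 + 1, by have := p.1.2; omega⟩ : Fin k),
     (⟨yc l p.2.1, by have := p.2.2; unfold yc; split_ifs <;> omega⟩ : Fin l)))

private def squareFun (k l : ℕ) (hk : 3 ≤ k) (hl : 2 ≤ l)
    (p : Fin (k - 2) × Fin (l - 1)) : Finset (Fin k × Fin l) :=
  { ((⟨p.1.1, by have := p.1.2; omega⟩ : Fin k),
     (⟨p.2.1, by have := p.2.2; omega⟩ : Fin l)),
    ((⟨p.1.1 + 1, by have := p.1.2; omega⟩ : Fin k),
     (⟨p.2.1 - 1, by have := p.2.2; omega⟩ : Fin l)),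
    ((⟨p.1.1 + 1, by have := p.1.2; omega⟩ : Fin k),
     (⟨p.2.1 + 1, by have := p.2.2; omega⟩ : Fin l)),
    ((⟨p.1.1 + 2, by have := p.1.2; omega⟩ : Fin k),
     (⟨p.2.1, by have := p.2.2; omega⟩ : Fin l)) }

private lemma edgeFun_inj (k l : ℕ) (hk : 3 ≤ k) (hl : 2 ≤ l) :
    Function.Injective (edgeFun k l hk hl) := by
  rintro ⟨⟨i, hi⟩, ⟨j, hj⟩⟩ ⟨⟨i', hi'⟩, ⟨j', hj'⟩⟩ h
  simp only [edgeFun, Sym2.eq_iff, Prod.mk.injEq, Fin.mk.injEq] at h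
  simp only [Prod.mk.injEq, Fin.mk.injEq]
  simp only [xc, yc] at h
  split_ifs at h <;>
    (try simp only [and_false, false_and, or_false, false_or, and_true, true_and,
      Nat.succ_ne_zero, or_self] at h) <;> omega

private lemma squareFun_inj (k l : ℕ) (hk : 3 ≤ k) (hl : 2 ≤ l) :
    Function.Injective (squareFun k l hk hl) := by
  rintro ⟨⟨i, hi⟩, ⟨v, hv⟩⟩ ⟨⟨i', hi'⟩, ⟨v', hv'⟩⟩ h
  have h1 : ((⟨i, by omega⟩ : Fin k), (⟨v, by omega⟩ : Fin l)) ∈ squareFun k l hk hl (⟨i', hi'⟩, ⟨v', hv'⟩) := by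
    rw [← h]; simp [squareFun]
  have h2 : ((⟨i', by omega⟩ : Fin k), (⟨v', by omega⟩ : Fin l)) ∈ squareFun k l hk hl (⟨i, hi⟩, ⟨v, hv⟩) := by
    rw [h]; simp [squareFun]
  simp only [squareFun, Finset.mem_insert, Finset.mem_singleton, Prod.mk.injEq,
    Fin.mk.injEq] at h1 h2
  simp only [Prod.mk.injEq, Fin.mk.injEq]
  omega

private lemma ncard_range_eq {α β : Type*} [Fintype α] (f : α → β)
    (hf : Function.Injective f) : (Set.range f).ncard = Fintype.card α := by
  rw [← Set.image_univ, Set.ncard_image_of_injective _ hf, Set.ncard_univ,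
    Nat.card_eq_fintype_card]

private lemma edge_set_eq (k l : ℕ) (hk : 3 ≤ k) (hl : 2 ≤ l) :
    {e : Sym2 (Fin k × Fin l) | ∃ p q : Fin k × Fin l,
        e = s(p, q) ∧ ((pathLG k).tensor (ELoopPath l)).Adj p q}
      = Set.range (edgeFun k l hk hl) := by
  ext e
  simp only [Set.mem_setOf_eq, Set.mem_range]
  constructor
  · rintro ⟨⟨⟨p1, hp1⟩, ⟨p2, hp2⟩⟩, ⟨⟨q1, hq1⟩, ⟨q2, hq2⟩⟩, rfl, had⟩
    simp only [LoopGraph.tensor, pathLG, ELoopPath] at had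
    obtain ⟨h1, h2⟩ := had
    rcases h1 with h1 | h1
    · rcases h2 with h2 | h2 | h2
      · exact ⟨(⟨p1, by omega⟩, ⟨p2, by omega⟩), by
          simp only [edgeFun, Sym2.eq_iff, Prod.mk.injEq, Fin.mk.injEq]
          unfold xc yc; split_ifs <;>
            (try simp only [true_and, and_true, false_and, and_false, or_false, false_or,
              true_or, or_true]) <;> first | trivial | omega⟩
      · exact ⟨(⟨p1, by omega⟩, ⟨l - 1 + q2, by omega⟩), by
          simp only [edgeFun, Sym2.eq_iff, Prod.mk.injEq, Fin.mk.injEq]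
          unfold xc yc; split_ifs <;>
            (try simp only [true_and, and_true, false_and, and_false, or_false, false_or,
              true_or, or_true]) <;> first | trivial | omega⟩
      · exact ⟨(⟨p1, by omega⟩, ⟨2 * l - 2, by omega⟩), by
          simp only [edgeFun, Sym2.eq_iff, Prod.mk.injEq, Fin.mk.injEq]
          unfold xc yc; split_ifs <;>
            (try simp only [true_and, and_true, false_and, and_false, or_false, false_or,
              true_or, or_true]) <;> first | trivial | omega⟩
    · rcases h2 with h2 | h2 | h2
      · exact ⟨(⟨q1, by omega⟩, ⟨l - 1 + p2, by omega⟩), by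
          simp only [edgeFun, Sym2.eq_iff, Prod.mk.injEq, Fin.mk.injEq]
          unfold xc yc; split_ifs <;>
            (try simp only [true_and, and_true, false_and, and_false, or_false, false_or,
              true_or, or_true]) <;> first | trivial | omega⟩
      · exact ⟨(⟨q1, by omega⟩, ⟨q2, by omega⟩), by
          simp only [edgeFun, Sym2.eq_iff, Prod.mk.injEq, Fin.mk.injEq]
          unfold xc yc; split_ifs <;>
            (try simp only [true_and, and_true, false_and, and_false, or_false, false_or,
              true_or, or_true]) <;> first | trivial | omega⟩
      · exact ⟨(⟨q1, by omega⟩, ⟨2 * l - 2, by omega⟩), by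
          simp only [edgeFun, Sym2.eq_iff, Prod.mk.injEq, Fin.mk.injEq]
          unfold xc yc; split_ifs <;>
            (try simp only [true_and, and_true, false_and, and_false, or_false, false_or,
              true_or, or_true]) <;> first | trivial | omega⟩
  · rintro ⟨⟨⟨i, hi⟩, ⟨j, hj⟩⟩, rfl⟩
    refine ⟨_, _, rfl, Or.inl rfl, ?_⟩
    show _ ∨ _ ∨ _
    unfold xc yc; split_ifs <;>
            (try simp only [true_and, and_true, false_and, and_false, or_false, false_or,
              true_or, or_true]) <;> first | trivial | omega


private lemma quad_perm1 {α : Type*} [DecidableEq α] (a b c d : α) :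
    ({a, b, c, d} : Finset α) = {b, c, d, a} := by
  ext x; simp only [Finset.mem_insert, Finset.mem_singleton]; tauto

private lemma quad_perm2 {α : Type*} [DecidableEq α] (a b c d : α) :
    ({a, b, c, d} : Finset α) = {c, d, a, b} := by
  ext x; simp only [Finset.mem_insert, Finset.mem_singleton]; tauto

private lemma quad_perm3 {α : Type*} [DecidableEq α] (a b c d : α) :
    ({a, b, c, d} : Finset α) = {d, a, b, c} := by
  ext x; simp only [Finset.mem_insert, Finset.mem_singleton]; tauto

private lemma quad_perm4 {α : Type*} [DecidableEq α] (a b c d : α) :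
    ({a, b, c, d} : Finset α) = {a, b, d, c} := by
  ext x; simp only [Finset.mem_insert, Finset.mem_singleton]; tauto

private lemma square_aux (k l : ℕ) (hk : 3 ≤ k) (hl : 2 ≤ l)
    (a b c d : Fin k × Fin l)
    (hab : ((pathLG k).tensor (ELoopPath l)).Adj a b)
    (hbc : ((pathLG k).tensor (ELoopPath l)).Adj b c)
    (hcd : ((pathLG k).tensor (ELoopPath l)).Adj c d)
    (hda : ((pathLG k).tensor (ELoopPath l)).Adj d a)
    (hbd : b ≠ d)
    (s1 : a.1.val + 1 = b.1.val) (s2 : b.1.val + 1 = c.1.val) :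
    ∃ p, ({a, b, c, d} : Finset (Fin k × Fin l)) = squareFun k l hk hl p := by
  obtain ⟨⟨a1, ha1⟩, ⟨a2, ha2⟩⟩ := a
  obtain ⟨⟨b1, hb1⟩, ⟨b2, hb2⟩⟩ := b
  obtain ⟨⟨c1, hc1⟩, ⟨c2, hc2⟩⟩ := c
  obtain ⟨⟨d1, hd1⟩, ⟨d2, hd2⟩⟩ := d
  simp only [LoopGraph.tensor, pathLG, ELoopPath] at hab hbc hcd hda
  simp only [ne_eq, Prod.mk.injEq, Fin.mk.injEq] at hbd s1 s2
  obtain ⟨hab1, hab2⟩ := hab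
  obtain ⟨hbc1, hbc2⟩ := hbc
  obtain ⟨hcd1, hcd2⟩ := hcd
  obtain ⟨hda1, hda2⟩ := hda
  have hd1' : d1 = a1 + 1 := by omega
  have key : c2 = a2 ∧ (b2 = a2 + 1 ∧ a2 = d2 + 1 ∨ d2 = a2 + 1 ∧ a2 = b2 + 1 ∨
      (a2 = 0 ∧ b2 = 0 ∧ d2 = 1) ∨ (a2 = 0 ∧ b2 = 1 ∧ d2 = 0)) := by
    omega
  refine ⟨((⟨a1, by omega⟩ : Fin (k - 2)), (⟨a2, by omega⟩ : Fin (l - 1))), ?_⟩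
  ext ⟨⟨x1, hx1⟩, ⟨x2, hx2⟩⟩
  simp only [squareFun, Finset.mem_insert, Finset.mem_singleton, Prod.mk.injEq, Fin.mk.injEq]
  constructor <;> intro h <;> omega

private lemma square_set_eq (k l : ℕ) (hk : 3 ≤ k) (hl : 2 ≤ l) :
    {s : Finset (Fin k × Fin l) | ∃ a b c d : Fin k × Fin l,
        s = {a, b, c, d} ∧ a ≠ b ∧ a ≠ c ∧ a ≠ d ∧ b ≠ c ∧ b ≠ d ∧ c ≠ d ∧
        ((pathLG k).tensor (ELoopPath l)).Adj a b ∧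
        ((pathLG k).tensor (ELoopPath l)).Adj b c ∧
        ((pathLG k).tensor (ELoopPath l)).Adj c d ∧
        ((pathLG k).tensor (ELoopPath l)).Adj d a}
      = Set.range (squareFun k l hk hl) := by
  ext s
  simp only [Set.mem_setOf_eq, Set.mem_range]
  constructor
  · rintro ⟨a, b, c, d, rfl, hab', hac', had', hbc', hbd', hcd', hab, hbc, hcd, hda⟩
    have hAB := hab; have hBC := hbc; have hCD := hcd; have hDA := hda
    simp only [LoopGraph.tensor, pathLG, ELoopPath] at hAB hBC hCD hDA
    obtain ⟨h1, h21⟩ := hAB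
    obtain ⟨h2, h22⟩ := hBC
    obtain ⟨h3, h23⟩ := hCD
    obtain ⟨h4, h24⟩ := hDA
    have nac : ¬(a.1.val = c.1.val ∧ a.2.val = c.2.val) := by
      simpa [Prod.ext_iff, Fin.ext_iff] using hac'
    have nbd : ¬(b.1.val = d.1.val ∧ b.2.val = d.2.val) := by
      simpa [Prod.ext_iff, Fin.ext_iff] using hbd'
    rcases h1 with h1 | h1 <;> rcases h2 with h2 | h2 <;>
      rcases h3 with h3 | h3 <;> rcases h4 with h4 | h4
    all_goals try omega
    -- pattern (+,+,-,-): cycle starts at a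
    · obtain ⟨p, hp⟩ := square_aux k l hk hl a b c d hab hbc hcd hda hbd'
        (by omega) (by omega)
      exact ⟨p, hp.symm⟩
    -- pattern (+,-,-,+): cycle starts at d
    · obtain ⟨p, hp⟩ := square_aux k l hk hl d a b c hda hab hbc hcd hac'
        (by omega) (by omega)
      exact ⟨p, ((quad_perm3 a b c d).trans hp).symm⟩
    -- pattern (-,+,+,-): cycle starts at b
    · obtain ⟨p, hp⟩ := square_aux k l hk hl b c d a hbc hcd hda hab (Ne.symm hac')
        (by omega) (by omega)
      exact ⟨p, ((quad_perm1 a b c d).trans hp).symm⟩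
    -- pattern (-,-,+,+): cycle starts at c
    · obtain ⟨p, hp⟩ := square_aux k l hk hl c d a b hcd hda hab hbc (Ne.symm hbd')
        (by omega) (by omega)
      exact ⟨p, ((quad_perm2 a b c d).trans hp).symm⟩
  · rintro ⟨⟨⟨i, hi⟩, ⟨v, hv⟩⟩, rfl⟩
    refine ⟨((⟨i, by omega⟩ : Fin k), (⟨v, by omega⟩ : Fin l)),
      ((⟨i + 1, by omega⟩ : Fin k), (⟨v - 1, by omega⟩ : Fin l)),
      ((⟨i + 2, by omega⟩ : Fin k), (⟨v, by omega⟩ : Fin l)),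
      ((⟨i + 1, by omega⟩ : Fin k), (⟨v + 1, by omega⟩ : Fin l)), ?_, ?_, ?_, ?_, ?_, ?_, ?_,
      ?_, ?_, ?_, ?_⟩
    · exact (quad_perm4 _ _ _ _).symm
    all_goals
      first
      | (simp only [ne_eq, Prod.mk.injEq, Fin.mk.injEq, true_and, and_true, false_and,
          and_false, not_false_iff, not_and]; omega)
      | (refine ⟨?_, ?_⟩ <;> simp [pathLG, ELoopPath] <;> omega)

end CountAux

/-- The direct product `P_k × E_l` (`k ≥ 3`, `l ≥ 2`) has exactly
`(2l − 1)(k − 1)` edges and exactly `(k − 2)(l − 1)` squares (four-cycles), and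
the number of squares equals `m − n + 1` where `m` is the number of edges and
`n = kl` the number of vertices (stated additively). -/
theorem path_times_Eloop_counts (k l : ℕ) (hk : 3 ≤ k) (hl : 2 ≤ l) :
    Set.ncard {e : Sym2 (Fin k × Fin l) | ∃ p q : Fin k × Fin l,
        e = s(p, q) ∧ ((pathLG k).tensor (ELoopPath l)).Adj p q}
      = (2 * l - 1) * (k - 1) ∧
    Set.ncard {s : Finset (Fin k × Fin l) | ∃ a b c d : Fin k × Fin l,
        s = {a, b, c, d} ∧ a ≠ b ∧ a ≠ c ∧ a ≠ d ∧ b ≠ c ∧ b ≠ d ∧ c ≠ d ∧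
        ((pathLG k).tensor (ELoopPath l)).Adj a b ∧
        ((pathLG k).tensor (ELoopPath l)).Adj b c ∧
        ((pathLG k).tensor (ELoopPath l)).Adj c d ∧
        ((pathLG k).tensor (ELoopPath l)).Adj d a}
      = (k - 2) * (l - 1) ∧
    (k - 2) * (l - 1) + k * l = (2 * l - 1) * (k - 1) + 1 := by
  refine ⟨?_, ?_, ?_⟩
  · rw [edge_set_eq k l hk hl, ncard_range_eq _ (edgeFun_inj k l hk hl),
      Fintype.card_prod, Fintype.card_fin, Fintype.card_fin, Nat.mul_comm]
  · rw [square_set_eq k l hk hl, ncard_range_eq _ (squareFun_inj k l hk hl),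
      Fintype.card_prod, Fintype.card_fin, Fintype.card_fin]
  · obtain ⟨a, rfl⟩ : ∃ a, k = a + 3 := ⟨k - 3, by omega⟩
    obtain ⟨b, rfl⟩ : ∃ b, l = b + 2 := ⟨l - 2, by omega⟩
    have e1 : a + 3 - 2 = a + 1 := by omega
    have e2 : b + 2 - 1 = b + 1 := by omega
    have e3 : 2 * (b + 2) - 1 = 2 * b + 3 := by omega
    have e4 : a + 3 - 1 = a + 2 := by omega
    rw [e1, e2, e3, e4]; ring
end
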